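/- Let v₁,…,v_N be an enumeration of the vertices {1,…,N} with no repeats (a bijection from {1,…,N} to itself), and for each i let S_i = {v₁,…,v_i}. Then the number of indices i ∈ {1,…,N} for which τ(S_i, v_i) > 0 is exactly k. -/

import Mathlib

open Matrix

noncomputable section

open scoped Classical in
/-- The Moore–Penrose pseudoinverse of a real matrix, characterised by the four
Penrose conditions:  `A A† A = A`, `A† A A† = A†`, `(A A†)ᵀ = A A†`, `(A† A)ᵀ = A† A`. -/
noncomputable def pinv {m n : Type*} [Fintype m] [Fintype n] [DecidableEq m] [DecidableEq n]
    (A : Matrix m n ℝ) : Matrix n m ℝ :=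
  if h : ∃ B : Matrix n m ℝ,
      A * B * A = A ∧ B * A * B = B ∧ (A * B)ᵀ = A * B ∧ (B * A)ᵀ = B * A
  then h.choose else 0

/-- The sampling matrix `M_S` of a subset `S ⊆ {1,…,N}`: rows are indexed by the
elements of `S`, and the row corresponding to `j ∈ S` is the standard basis row vector `eⱼᵀ`. -/
def samp {N : ℕ} (S : Finset (Fin N)) : Matrix {x // x ∈ S} (Fin N) ℝ :=
  fun i j => if (i : Fin N) = j then 1 else 0

/-- Squared Frobenius norm of a matrix. -/
def frobSq {m n : Type*} [Fintype m] [Fintype n] (A : Matrix m n ℝ) : ℝ :=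
  ∑ i, ∑ j, (A i j) ^ 2

/-- The least-squares reconstruction matrix `R_S = U (M_S U)†`. -/
def lsRec {N k : ℕ} (U : Matrix (Fin N) (Fin k) ℝ) (S : Finset (Fin N)) :
    Matrix (Fin N) {x // x ∈ S} ℝ :=
  U * pinv (samp S * U)

/-- `ξ₁(S) = ‖U − R_S M_S U‖_F²`, the noiseless reconstruction error. -/
def xi1 {N k : ℕ} (U : Matrix (Fin N) (Fin k) ℝ) (S : Finset (Fin N)) : ℝ :=
  frobSq (U - lsRec U S * (samp S * U))

/-- `ξ₂(S) = ‖R_S‖_F²`, the noise-sensitivity term. -/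
def xi2 {N k : ℕ} (U : Matrix (Fin N) (Fin k) ℝ) (S : Finset (Fin N)) : ℝ :=
  frobSq (lsRec U S)

/-- `S_m = {v₁,…,v_m}`: the set consisting of the first `m` vertices of the
enumeration `v` (0-indexed: the vertices `v j` for `j < m`). -/
def firstSamples {N : ℕ} (v : Fin N → Fin N) (m : ℕ) : Finset (Fin N) :=
  (Finset.univ.filter fun j : Fin N => (j : ℕ) < m).image v

/-!
Write `u_j` for the rows of `U` and `G_S = ∑_{j ∈ S} u_j u_jᵀ = (M_S U)ᵀ (M_S U)`. Then
`(M_S U)† = G_S† (M_S U)ᵀ`, and since `U` has orthonormal columns, `ξ₂(S) = tr G_S†`.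
Adding a vertex `a` is the rank-one update `G_S + u_a u_aᵀ`, whose pseudoinverse is explicit:
if `u_a` lies in the span of the sampled rows the trace drops by `‖G†u‖² / (1 + uᵀG†u)`, and
otherwise it grows by `(1 + uᵀG†u) / ‖u - G G† u‖²`. So `τ(S_i, v_i) > 0` exactly when `u_{v_i}`
is not in the span of `u_{v_1}, …, u_{v_{i-1}}`, which along an enumeration of all vertices happens
`dim span {u_j} = k` times.
-/

section PseudoInverse

variable {m n : Type*} [Fintype m] [Fintype n]

theorem frobSq_eq_trace (M : Matrix m n ℝ) : frobSq M = trace (Mᵀ * M) := by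
  rw [frobSq, Finset.sum_comm]
  simp [trace, mul_apply, pow_two]

def IsPinv (A : Matrix m n ℝ) (B : Matrix n m ℝ) : Prop :=
  A * B * A = A ∧ B * A * B = B ∧ (A * B)ᵀ = A * B ∧ (B * A)ᵀ = B * A

namespace IsPinv

variable {A : Matrix m n ℝ} {B C : Matrix n m ℝ}

theorem transpose (h : IsPinv A B) : IsPinv Aᵀ Bᵀ := by
  obtain ⟨h₁, h₂, h₃, h₄⟩ := h
  refine ⟨?_, ?_, ?_, ?_⟩
  · rw [← transpose_mul, ← transpose_mul, ← Matrix.mul_assoc, h₁]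
  · rw [← transpose_mul, ← transpose_mul, ← Matrix.mul_assoc, h₂]
  · rw [← transpose_mul, transpose_transpose, h₄]
  · rw [← transpose_mul, transpose_transpose, h₃]

theorem unique (hB : IsPinv A B) (hC : IsPinv A C) : B = C := by
  obtain ⟨hB₁, hB₂, hB₃, hB₄⟩ := hB
  obtain ⟨hC₁, hC₂, hC₃, hC₄⟩ := hC
  have hAB : A * B = A * C := calc
    A * B = Bᵀ * (A * C * A)ᵀ := by rw [hC₁, ← transpose_mul, hB₃]
    _ = (A * B * A) * C := by
      rw [transpose_mul, hC₃, ← Matrix.mul_assoc, ← transpose_mul, hB₃, Matrix.mul_assoc,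
        Matrix.mul_assoc, Matrix.mul_assoc]
    _ = A * C := by rw [hB₁]
  have hBA : B * A = C * A := calc
    B * A = (A * C * A)ᵀ * Bᵀ := by rw [hC₁, ← transpose_mul, hB₄]
    _ = C * (A * B * A) := by
      rw [Matrix.mul_assoc, transpose_mul, hC₄, Matrix.mul_assoc, ← transpose_mul, hB₄,
        Matrix.mul_assoc, Matrix.mul_assoc]
    _ = C * A := by rw [hB₁]
  rw [← hB₂, hBA, Matrix.mul_assoc, hAB, ← Matrix.mul_assoc, hC₂]

theorem pinv_eq [DecidableEq m] [DecidableEq n] (h : IsPinv A B) : pinv A = B := by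
  have hex : ∃ B, IsPinv A B := ⟨B, h⟩
  rw [pinv]
  exact (dif_pos hex).trans (hex.choose_spec.unique h)

section Square

variable {G H : Matrix n n ℝ}

theorem transpose_eq_self (hG : Gᵀ = G) (h : IsPinv G H) : Hᵀ = H :=
  (hG ▸ h.transpose).unique h

theorem commute (hG : Gᵀ = G) (h : IsPinv G H) : Commute G H := by
  rw [Commute, SemiconjBy, ← h.2.2.1, transpose_mul, hG, h.transpose_eq_self hG]

theorem of_transpose_eq_self {A B : Matrix n n ℝ} (hA : Aᵀ = A) (hB : Bᵀ = B)
    (hAB : (A * B)ᵀ = A * B) (hABA : A * B * A = A) (hABB : A * B * B = B) : IsPinv A B := by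
  have hBA : B * A = A * B := by rw [← hA, ← hB, ← transpose_mul, hAB, hA, hB]
  exact ⟨hABA, by rw [hBA, hABB], hAB, by rw [hBA, hAB]⟩

theorem add_vecMulVec_of_mulVec_eq (hG : Gᵀ = G) (h : IsPinv G H) {u : n → ℝ}
    (hu : G *ᵥ (H *ᵥ u) = u) (hd : 1 + u ⬝ᵥ H *ᵥ u ≠ 0) :
    IsPinv (G + vecMulVec u u)
      (H - (1 + u ⬝ᵥ H *ᵥ u)⁻¹ • vecMulVec (H *ᵥ u) (H *ᵥ u)) := by
  have hH : Hᵀ = H := h.transpose_eq_self hG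
  have hGHH : G * H * H = H := by rw [(h.commute hG).eq, h.2.1]
  set w := H *ᵥ u
  have huH : u ᵥ* H = w := by rw [← mulVec_transpose, hH]
  have hGHw : (G * H) *ᵥ w = w := by rw [mulVec_mulVec, hGHH]
  have hprod : (G + vecMulVec u u) * (H - (1 + u ⬝ᵥ w)⁻¹ • vecMulVec w w) = G * H := by
    rw [add_mul, mul_sub, mul_sub, Matrix.mul_smul, Matrix.mul_smul, mul_vecMulVec, hu,
      vecMulVec_mul, huH, vecMulVec_mul_vecMulVec, vecMulVec_smul]
    match_scalars
    · ring
    · field_simp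
      ring
  refine .of_transpose_eq_self ?_ ?_ ?_ ?_ ?_
  · rw [transpose_add, transpose_vecMulVec, hG]
  · rw [transpose_sub, transpose_smul, transpose_vecMulVec, hH]
  · rw [hprod, h.2.2.1]
  · rw [hprod, mul_add, h.1, mul_vecMulVec, ← mulVec_mulVec, hu]
  · rw [hprod, mul_sub, Matrix.mul_smul, mul_vecMulVec, hGHw, hGHH]

theorem mulVec_eq_zero_of_mulVec_mulVec_eq_sub (hG : Gᵀ = G) (h : IsPinv G H) {u q : n → ℝ}
    (hu : G *ᵥ (H *ᵥ u) = u - q) : G *ᵥ q = 0 ∧ H *ᵥ q = 0 := by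
  have hGGH : G * G * H = G := by
    rw [Matrix.mul_assoc, (h.commute hG).eq, ← Matrix.mul_assoc, h.1]
  rw [← sub_sub_cancel u q, ← hu]
  exact ⟨by rw [mulVec_sub, mulVec_mulVec, mulVec_mulVec, hGGH, sub_self],
    by rw [mulVec_sub, mulVec_mulVec, mulVec_mulVec, h.2.1, sub_self]⟩

/-- Here `q` is the component of `u` orthogonal to the range of `G`. -/
theorem add_vecMulVec_of_mulVec_mulVec_eq_sub (hG : Gᵀ = G) (h : IsPinv G H) {u q : n → ℝ}
    (hu : G *ᵥ (H *ᵥ u) = u - q) (hq : q ≠ 0) :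
    IsPinv (G + vecMulVec u u)
      (H - (q ⬝ᵥ q)⁻¹ • (vecMulVec (H *ᵥ u) q + vecMulVec q (H *ᵥ u)) +
        ((1 + u ⬝ᵥ H *ᵥ u) / (q ⬝ᵥ q) ^ 2) • vecMulVec q q) := by
  have hH : Hᵀ = H := h.transpose_eq_self hG
  have hGHH : G * H * H = H := by rw [(h.commute hG).eq, h.2.1]
  obtain ⟨hGq, hHq⟩ := h.mulVec_eq_zero_of_mulVec_mulVec_eq_sub hG hu
  set w := H *ᵥ u
  set s := q ⬝ᵥ q
  have hs : s ≠ 0 := dotProduct_self_eq_zero.not.mpr hq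
  have huH : u ᵥ* H = w := by rw [← mulVec_transpose, hH]
  have hqH : q ᵥ* H = 0 := by rw [← mulVec_transpose, hH, hHq]
  have hqG : q ᵥ* G = 0 := by rw [← mulVec_transpose, hG, hGq]
  have hqw : q ⬝ᵥ w = 0 := by rw [dotProduct_mulVec, hqH, zero_dotProduct]
  have hqu : q ⬝ᵥ u = s := by
    have hu' : u = q + G *ᵥ w := by rw [hu, add_sub_cancel]
    rw [hu', dotProduct_add, dotProduct_mulVec, hqG, zero_dotProduct, add_zero]
  have hGHw : (G * H) *ᵥ w = w := by rw [mulVec_mulVec, hGHH]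
  have hGHq : (G * H) *ᵥ q = 0 := by rw [← mulVec_mulVec, hHq, mulVec_zero]
  set H' :=
    H - s⁻¹ • (vecMulVec w q + vecMulVec q w) + ((1 + u ⬝ᵥ w) / s ^ 2) • vecMulVec q q
  have huH' : u ᵥ* H' = s⁻¹ • q := by
    simp only [H', vecMul_add, vecMul_sub, vecMul_smul, vecMul_vecMulVec, huH, dotProduct_comm u,
      hqu]
    match_scalars <;> field_simp <;> ring
  have hqH' : q ᵥ* H' = ((1 + u ⬝ᵥ w) / s) • q - w := by
    simp only [H', vecMul_add, vecMul_sub, vecMul_smul, vecMul_vecMulVec, hqH, hqw]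
    match_scalars <;> field_simp <;> ring
  have hprod : (G + vecMulVec u u) * H' = G * H + s⁻¹ • vecMulVec q q := by
    rw [add_mul, vecMulVec_mul, huH']
    simp only [H', mul_add, mul_sub, Matrix.mul_smul, mul_vecMulVec, hu, hGq, sub_vecMulVec,
      zero_vecMulVec, vecMulVec_smul]
    module
  refine .of_transpose_eq_self ?_ ?_ ?_ ?_ ?_
  · rw [transpose_add, transpose_vecMulVec, hG]
  · simp only [H', transpose_add, transpose_sub, transpose_smul, transpose_vecMulVec, hH,
      add_comm (vecMulVec q w)]
  · rw [hprod, transpose_add, transpose_smul, transpose_vecMulVec, h.2.2.1]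
  · rw [hprod, add_mul, mul_add, mul_add, h.1, mul_vecMulVec, ← mulVec_mulVec, hu,
      Matrix.smul_mul, Matrix.smul_mul, vecMulVec_mul, hqG, vecMulVec_zero,
      vecMulVec_mul_vecMulVec, hqu, sub_vecMulVec, vecMulVec_smul, smul_zero, zero_add, smul_smul,
      inv_mul_cancel₀ hs, one_smul, add_assoc, sub_add_cancel]
  · rw [hprod, add_mul, Matrix.smul_mul, vecMulVec_mul, hqH']
    simp only [H', mul_add, mul_sub, Matrix.mul_smul, mul_vecMulVec, hGHH, hGHw, hGHq,
      zero_vecMulVec, vecMulVec_sub, vecMulVec_smul]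
    match_scalars <;> field_simp

theorem exists_add_vecMulVec (hG : G.PosSemidef) (h : IsPinv G H) (u : n → ℝ) :
    ∃ H', IsPinv (G + vecMulVec u u) H' ∧ (trace H < trace H' ↔ G *ᵥ (H *ᵥ u) ≠ u) := by
  have hGt : Gᵀ = G := by rw [← conjTranspose_eq_transpose_of_trivial]; exact hG.1
  have hH : Hᵀ = H := h.transpose_eq_self hGt
  have hself (x : n → ℝ) : 0 ≤ x ⬝ᵥ x := Finset.sum_nonneg fun i _ => mul_self_nonneg _
  have hd : 0 < 1 + u ⬝ᵥ H *ᵥ u := by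
    have hquad : u ⬝ᵥ H *ᵥ u = (H *ᵥ u) ⬝ᵥ G *ᵥ (H *ᵥ u) := by
      conv_lhs => rw [← h.2.1]
      rw [← mulVec_mulVec, ← mulVec_mulVec, dotProduct_mulVec, ← mulVec_transpose, hH]
    have := hG.dotProduct_mulVec_nonneg (H *ᵥ u)
    rw [star_trivial] at this
    linarith
  by_cases hu : G *ᵥ (H *ᵥ u) = u
  · refine ⟨_, h.add_vecMulVec_of_mulVec_eq hGt hu hd.ne', iff_of_false ?_ (not_not_intro hu)⟩
    rw [trace_sub, trace_smul, trace_vecMulVec, smul_eq_mul, not_lt, sub_le_self_iff]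
    exact mul_nonneg (inv_nonneg.mpr hd.le) (hself _)
  · obtain ⟨q, hq_def⟩ : ∃ q, q = u - G *ᵥ (H *ᵥ u) := ⟨_, rfl⟩
    have hq : q ≠ 0 := hq_def ▸ sub_ne_zero.mpr (Ne.symm hu)
    have hu' : G *ᵥ (H *ᵥ u) = u - q := by rw [hq_def, sub_sub_cancel]
    have hHq : H *ᵥ q = 0 := (h.mulVec_eq_zero_of_mulVec_mulVec_eq_sub hGt hu').2
    refine ⟨_, h.add_vecMulVec_of_mulVec_mulVec_eq_sub hGt hu' hq, iff_of_true ?_ hu⟩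
    have hwq : (H *ᵥ u) ⬝ᵥ q = 0 := by
      rw [← vecMul_transpose, hH, ← dotProduct_mulVec, hHq, dotProduct_zero]
    simp only [trace_add, trace_sub, trace_smul, trace_vecMulVec, dotProduct_comm q (H *ᵥ u), hwq,
      add_zero, smul_eq_mul, mul_zero, sub_zero, lt_add_iff_pos_right]
    have hs : 0 < q ⬝ᵥ q := (hself q).lt_of_ne (Ne.symm (dotProduct_self_eq_zero.not.mpr hq))
    exact mul_pos (div_pos hd (pow_pos hs 2)) hs

end Square

section TransposeMulSelf

variable {H : Matrix n n ℝ}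

theorem transpose_mul_self_mul_mul_transpose [DecidableEq n] (h : IsPinv (Aᵀ * A) H) :
    Aᵀ * A * H * Aᵀ = Aᵀ := by
  set G := Aᵀ * A
  have hproj : (1 - G * H) * G = 0 := by rw [Matrix.sub_mul, Matrix.one_mul, h.1, sub_self]
  have hzero : ((1 - G * H) * Aᵀ) * ((1 - G * H) * Aᵀ)ᵀ = 0 := by
    rw [transpose_mul, transpose_transpose, Matrix.mul_assoc, ← Matrix.mul_assoc Aᵀ,
      ← Matrix.mul_assoc, hproj, Matrix.zero_mul]
  rw [← conjTranspose_eq_transpose_of_trivial ((1 - G * H) * Aᵀ),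
    self_mul_conjTranspose_eq_zero, Matrix.sub_mul, Matrix.one_mul, sub_eq_zero] at hzero
  exact hzero.symm

theorem of_transpose_mul_self [DecidableEq n] (h : IsPinv (Aᵀ * A) H) : IsPinv A (H * Aᵀ) := by
  have hG : (Aᵀ * A)ᵀ = Aᵀ * A := by rw [transpose_mul, transpose_transpose]
  have hH : Hᵀ = H := h.transpose_eq_self hG
  refine ⟨?_, ?_, ?_, ?_⟩
  · conv_rhs => rw [← transpose_transpose A, ← h.transpose_mul_self_mul_mul_transpose]
    rw [transpose_mul, transpose_mul, transpose_mul, hH, transpose_transpose, Matrix.mul_assoc,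
      Matrix.mul_assoc]
  · rw [Matrix.mul_assoc H Aᵀ A, ← Matrix.mul_assoc _ H Aᵀ, h.2.1]
  · rw [← Matrix.mul_assoc, transpose_mul, transpose_mul, hH, transpose_transpose,
      Matrix.mul_assoc]
  · rw [Matrix.mul_assoc, transpose_mul, hG, hH, (h.commute hG).eq]

theorem frobSq_mul_transpose (h : IsPinv (Aᵀ * A) H) : frobSq (H * Aᵀ) = trace H := by
  have hH : Hᵀ = H := h.transpose_eq_self (by rw [transpose_mul, transpose_transpose])
  rw [frobSq_eq_trace, transpose_mul, transpose_transpose, hH, trace_mul_comm, Matrix.mul_assoc,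
    ← Matrix.mul_assoc Aᵀ, ← Matrix.mul_assoc, h.2.1]

theorem mem_span_range_row_iff [DecidableEq n] (h : IsPinv (Aᵀ * A) H) (u : n → ℝ) :
    u ∈ Submodule.span ℝ (Set.range A.row) ↔ (Aᵀ * A) *ᵥ (H *ᵥ u) = u := by
  rw [← range_vecMulLinear]
  constructor
  · rintro ⟨y, rfl⟩
    rw [vecMulLinear_apply, ← mulVec_transpose, mulVec_mulVec, mulVec_mulVec,
      h.transpose_mul_self_mul_mul_transpose]
  · intro hu
    refine ⟨A *ᵥ (H *ᵥ u), ?_⟩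
    rw [vecMulLinear_apply, ← mulVec_transpose, mulVec_mulVec, hu]

end TransposeMulSelf

end IsPinv

end PseudoInverse

section Counting

open Finset Submodule Module

open Classical in
theorem card_filter_notMem_span_eq_finrank {ι K V : Type*} [LinearOrder ι] [DivisionRing K]
    [AddCommGroup V] [Module K V] [FiniteDimensional K V] (x : ι → V) (s : Finset ι) :
    #{i ∈ s | x i ∉ span K (x '' (s ∩ Set.Iio i))} = finrank K (span K (x '' s)) := by
  induction s using Finset.induction_on_max with
  | empty => rw [filter_empty, card_empty, coe_empty, Set.image_empty, span_empty, finrank_bot]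
  | insert a s ha ih =>
    have hbelow : ∀ i ∈ s, ↑(insert a s) ∩ Set.Iio i = ↑s ∩ Set.Iio i := by
      intro i hi
      rw [coe_insert, Set.insert_inter_of_notMem (t := Set.Iio i) (ha i hi).not_gt]
    have hbelow_a : ↑(insert a s) ∩ Set.Iio a = ↑s := by
      rw [coe_insert, Set.insert_inter_of_notMem (t := Set.Iio a) (lt_irrefl a), Set.inter_eq_left]
      exact ha
    have ha' : a ∉ s := fun h => lt_irrefl a (ha a h)
    rw [filter_insert, hbelow_a, filter_congr fun i hi => by rw [hbelow i hi], coe_insert,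
      Set.image_insert_eq, span_insert, sup_comm]
    by_cases hnew : x a ∈ span K (x '' s)
    · rw [if_neg (not_not.mpr hnew), ih,
        sup_eq_left.mpr ((span_singleton_le_iff_mem _ _).mpr hnew)]
    · rw [if_pos hnew, card_insert_of_notMem (fun h => ha' (mem_filter.mp h).1), ih,
        finrank_sup_span_singleton hnew]

end Counting

section Sampling

variable {N k : ℕ} (U : Matrix (Fin N) (Fin k) ℝ)

def sampleGram (S : Finset (Fin N)) : Matrix (Fin k) (Fin k) ℝ :=
  ∑ j ∈ S, vecMulVec (U j) (U j)

theorem samp_mul_apply (S : Finset (Fin N)) (i : S) : (samp S * U) i = U i := by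
  ext d
  rw [mul_apply]
  simp [samp]

theorem range_row_samp_mul (S : Finset (Fin N)) : Set.range (samp S * U).row = U.row '' S := by
  rw [Set.image_eq_range]
  exact congrArg Set.range (funext (samp_mul_apply U S))

theorem sampleGram_eq_transpose_mul (S : Finset (Fin N)) :
    sampleGram U S = (samp S * U)ᵀ * (samp S * U) := by
  ext c d
  rw [mul_apply]
  simp only [sampleGram, transpose_apply, samp_mul_apply, Matrix.sum_apply, vecMulVec_apply]
  exact (Finset.sum_coe_sort S fun j => U j c * U j d).symm

theorem sampleGram_insert {S : Finset (Fin N)} {a : Fin N} (ha : a ∉ S) :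
    sampleGram U (insert a S) = sampleGram U S + vecMulVec (U a) (U a) := by
  rw [sampleGram, Finset.sum_insert ha, add_comm, sampleGram]

theorem posSemidef_sampleGram (S : Finset (Fin N)) : (sampleGram U S).PosSemidef := by
  rw [sampleGram_eq_transpose_mul, ← conjTranspose_eq_transpose_of_trivial]
  exact posSemidef_conjTranspose_mul_self _

theorem exists_isPinv_sampleGram (S : Finset (Fin N)) : ∃ H, IsPinv (sampleGram U S) H := by
  classical
  induction S using Finset.induction_on with
  | empty => exact ⟨0, by simp [sampleGram, IsPinv]⟩
  | insert a S ha ih =>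
    obtain ⟨H, hH⟩ := ih
    obtain ⟨H', hH', -⟩ := hH.exists_add_vecMulVec (posSemidef_sampleGram U S) (U a)
    exact ⟨H', sampleGram_insert U ha ▸ hH'⟩

variable {U}

theorem xi2_eq_trace (hU : Uᵀ * U = 1) {S : Finset (Fin N)} {H : Matrix (Fin k) (Fin k) ℝ}
    (hH : IsPinv (sampleGram U S) H) : xi2 U S = trace H := by
  rw [sampleGram_eq_transpose_mul] at hH
  rw [xi2, lsRec, hH.of_transpose_mul_self.pinv_eq, frobSq_eq_trace, transpose_mul,
    Matrix.mul_assoc, ← Matrix.mul_assoc Uᵀ, hU, Matrix.one_mul, ← frobSq_eq_trace,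
    hH.frobSq_mul_transpose]

theorem mem_span_image_row_iff {S : Finset (Fin N)} {H : Matrix (Fin k) (Fin k) ℝ}
    (hH : IsPinv (sampleGram U S) H) (u : Fin k → ℝ) :
    u ∈ Submodule.span ℝ (U.row '' S) ↔ sampleGram U S *ᵥ (H *ᵥ u) = u := by
  rw [sampleGram_eq_transpose_mul] at hH ⊢
  rw [← range_row_samp_mul]
  exact hH.mem_span_range_row_iff u

theorem xi2_lt_xi2_insert_iff (hU : Uᵀ * U = 1) {S : Finset (Fin N)} {a : Fin N} (ha : a ∉ S) :
    xi2 U S < xi2 U (insert a S) ↔ U a ∉ Submodule.span ℝ (U.row '' S) := by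
  obtain ⟨H, hH⟩ := exists_isPinv_sampleGram U S
  obtain ⟨H', hH', htr⟩ := hH.exists_add_vecMulVec (posSemidef_sampleGram U S) (U a)
  rw [← sampleGram_insert U ha] at hH'
  rw [xi2_eq_trace hU hH, xi2_eq_trace hU hH', htr, mem_span_image_row_iff hH]

theorem span_range_row_eq_top (hU : Uᵀ * U = 1) : Submodule.span ℝ (Set.range U.row) = ⊤ := by
  rw [← range_vecMulLinear, LinearMap.range_eq_top]
  exact fun y => ⟨U *ᵥ y, by rw [vecMulLinear_apply, ← mulVec_transpose, mulVec_mulVec, hU,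
    one_mulVec]⟩

end Sampling

section FirstSamples

variable {N : ℕ} (v : Fin N → Fin N)

theorem firstSamples_succ (i : Fin N) :
    firstSamples v (i + 1) = insert (v i) (firstSamples v i) := by
  rw [firstSamples, firstSamples, ← Finset.image_insert]
  congr 1
  ext j
  simp only [Finset.mem_filter, Finset.mem_univ, true_and, Finset.mem_insert, Fin.ext_iff]
  omega

theorem coe_firstSamples (i : Fin N) : (firstSamples v i : Set (Fin N)) = v '' Set.Iio i := by
  ext
  simp [firstSamples]

theorem notMem_firstSamples {v} (hv : Function.Injective v) (i : Fin N) :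
    v i ∉ firstSamples v i := by
  rw [← Finset.mem_coe, coe_firstSamples, hv.mem_set_image]
  exact lt_irrefl i

end FirstSamples

theorem stmt2_general (N k : ℕ) (hN : 0 < N) (hk : 0 < k)
    (U : Matrix (Fin N) (Fin k) ℝ) (hU : Uᵀ * U = 1)
    (v : Fin N → Fin N) (hv : Function.Bijective v) :
    (Finset.univ.filter fun i : Fin N =>
        0 < ((k : ℝ) / N) *
          (xi2 U (firstSamples v ((i : ℕ) + 1)) -
            xi2 U ((firstSamples v ((i : ℕ) + 1)).erase (v i)))).card = k := by
  classical
  have hτ_pos (i : Fin N) : 0 < ((k : ℝ) / N) *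
      (xi2 U (firstSamples v (i + 1)) - xi2 U ((firstSamples v (i + 1)).erase (v i))) ↔
      (U.row ∘ v) i ∉ Submodule.span ℝ
        ((U.row ∘ v) '' (↑(Finset.univ : Finset (Fin N)) ∩ Set.Iio i)) := by
    rw [firstSamples_succ, Finset.erase_insert (notMem_firstSamples hv.1 i),
      mul_pos_iff_of_pos_left (by positivity), sub_pos,
      xi2_lt_xi2_insert_iff hU (notMem_firstSamples hv.1 i), coe_firstSamples, Finset.coe_univ,
      Set.univ_inter, Set.image_comp]
    rfl
  rw [Finset.filter_congr fun i _ => hτ_pos i,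
    card_filter_notMem_span_eq_finrank (U.row ∘ v) Finset.univ, Finset.coe_univ, Set.image_univ,
    hv.2.range_comp, span_range_row_eq_top hU, finrank_top, Module.finrank_fin_fun]

/-- for any enumeration `v₁,…,v_N` of the vertices with no repeats, with
`S_i = {v₁,…,v_i}`, the number of indices `i ∈ {1,…,N}` with `τ(S_i, v_i) > 0` is
exactly `k`.  (Here, 0-indexed, index `i : Fin N` corresponds to the set
`S_{i+1} = firstSamples v (i+1)` with last added vertex `v i`.) -/
theorem stmt2 (N k : ℕ) (hN : 0 < N) (hk : 0 < k) (hkN : k ≤ N)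
    (U : Matrix (Fin N) (Fin k) ℝ) (hU : Uᵀ * U = 1)
    (v : Fin N → Fin N) (hv : Function.Bijective v) :
    (Finset.univ.filter fun i : Fin N =>
        0 < ((k : ℝ) / N) *
          (xi2 U (firstSamples v ((i : ℕ) + 1)) -
            xi2 U ((firstSamples v ((i : ℕ) + 1)).erase (v i)))).card = k :=
  stmt2_general N k hN hk U hU v hv
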